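/- arXiv:2208.01111 — 3 statements merged into one kernel-verified Lean document; each statement's English description precedes it below -/
import Mathlib

section
/- Let H be a real Hilbert space, let A : H → H be a self-adjoint continuous linear operator, let T > 0, and let x ∈ H with x ≠ 0. Then for every t ∈ [0,T], ‖exp(tA) x‖ ≤ ‖x‖^(1 − t/T) · ‖exp(TA) x‖^(t/T), where the powers are real powers. -/
open Real Set
open scoped RealInnerProductSpace

/-! If `y' = A y` with `A` symmetric, then `g = ‖y‖²` has `g' = 2⟪A y, y⟫` and `g'' = 4‖A y‖²`,
so `g'² ≤ g g''` by Cauchy–Schwarz. Hence `log ‖y‖` is convex, and the estimate is this convexity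
between the times `0` and `T`, exponentiated. For `y t = exp (t • A) x` the curve never vanishes
because `exp (t • A)` is invertible. -/

theorem convexOn_univ_log_of_sq_deriv_le_mul_deriv2 {g g' g'' : ℝ → ℝ} (hg : ∀ s, 0 < g s)
    (hg' : ∀ s, HasDerivAt g (g' s) s) (hg'' : ∀ s, HasDerivAt g' (g'' s) s)
    (h : ∀ s, g' s ^ 2 ≤ g s * g'' s) : ConvexOn ℝ univ (fun s => log (g s)) := by
  have hlog : ∀ s, HasDerivAt (fun s => log (g s)) (g' s / g s) s := fun s =>
    (hg' s).log (hg s).ne'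
  refine convexOn_of_hasDerivWithinAt2_nonneg convex_univ
    (fun s _ => (hlog s).continuousAt.continuousWithinAt)
    (fun s _ => (hlog s).hasDerivWithinAt)
    (fun s _ => ((hg'' s).div (hg' s) (hg s).ne').hasDerivWithinAt) fun s _ => ?_
  exact div_nonneg (by nlinarith [h s]) (sq_nonneg _)

theorem le_rpow_mul_rpow_of_convexOn_log {φ : ℝ → ℝ} (hφ : ∀ s, 0 < φ s)
    (hconv : ConvexOn ℝ univ (fun s => log (φ s))) (a b : ℝ) {θ : ℝ} (hθ₀ : 0 ≤ θ)
    (hθ₁ : θ ≤ 1) : φ ((1 - θ) * a + θ * b) ≤ φ a ^ (1 - θ) * φ b ^ θ := by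
  have ha := hφ a
  have hb := hφ b
  rw [← log_le_log_iff (hφ _) (by positivity), log_mul (by positivity) (by positivity),
    log_rpow ha, log_rpow hb]
  simpa only [smul_eq_mul] using hconv.2 (mem_univ a) (mem_univ b) (sub_nonneg.2 hθ₁) hθ₀ (by ring)

section EvolutionEquation

variable {H : Type*} [NormedAddCommGroup H] [InnerProductSpace ℝ H] {A : H →L[ℝ] H} {y : ℝ → H}

theorem convexOn_log_norm_of_hasDerivAt (hA : (A : H →ₗ[ℝ] H).IsSymmetric)
    (hy : ∀ s, HasDerivAt y (A (y s)) s) (hy₀ : ∀ s, y s ≠ 0) :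
    ConvexOn ℝ univ (fun s => log ‖y s‖) := by
  have hnorm_sq : ∀ s, HasDerivAt (‖y ·‖ ^ 2) (2 * ⟪A (y s), y s⟫) s := fun s => by
    simpa only [real_inner_comm] using (hy s).norm_sq
  have hinner : ∀ s, HasDerivAt (fun s => 2 * ⟪A (y s), y s⟫) (4 * ‖A (y s)‖ ^ 2) s := by
    intro s
    have hAy : HasDerivAt (fun s => A (y s)) (A (A (y s))) s :=
      A.hasFDerivAt.comp_hasDerivAt s (hy s)
    have hsymm : ⟪A (A (y s)), y s⟫ = ⟪A (y s), A (y s)⟫ := hA _ _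
    refine ((hAy.inner ℝ (hy s)).const_mul 2).congr_deriv ?_
    rw [hsymm, real_inner_self_eq_norm_sq]
    ring
  have hCS : ∀ s, (2 * ⟪A (y s), y s⟫) ^ 2 ≤ ‖y s‖ ^ 2 * (4 * ‖A (y s)‖ ^ 2) := fun s => by
    have := real_inner_mul_inner_self_le (A (y s)) (y s)
    rw [real_inner_self_eq_norm_sq, real_inner_self_eq_norm_sq] at this
    nlinarith
  refine ((convexOn_univ_log_of_sq_deriv_le_mul_deriv2
    (fun s => pow_pos (norm_pos_iff.2 (hy₀ s)) 2) hnorm_sq hinner hCS).smul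
    (by norm_num : (0 : ℝ) ≤ 1 / 2)).congr fun s _ => ?_
  simp only [log_pow, smul_eq_mul]
  ring

theorem norm_le_rpow_mul_rpow_of_hasDerivAt (hA : (A : H →ₗ[ℝ] H).IsSymmetric)
    (hy : ∀ s, HasDerivAt y (A (y s)) s) (hy₀ : ∀ s, y s ≠ 0) {T t : ℝ} (hT : 0 < T)
    (ht : t ∈ Icc 0 T) : ‖y t‖ ≤ ‖y 0‖ ^ (1 - t / T) * ‖y T‖ ^ (t / T) := by
  have key := le_rpow_mul_rpow_of_convexOn_log (fun s => norm_pos_iff.2 (hy₀ s))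
    (convexOn_log_norm_of_hasDerivAt hA hy hy₀) 0 T (div_nonneg ht.1 hT.le)
    ((div_le_one hT).2 ht.2)
  rwa [mul_zero, zero_add, div_mul_cancel₀ t hT.ne'] at key

end EvolutionEquation

theorem stmt_0
    {H : Type*} [NormedAddCommGroup H] [InnerProductSpace ℝ H] [CompleteSpace H]
    (A : H →L[ℝ] H) (hA : ∀ x y : H, ⟪A x, y⟫ = ⟪x, A y⟫)
    (T : ℝ) (hT : 0 < T) (x : H) (hx : x ≠ 0) :
    ∀ t ∈ Set.Icc (0 : ℝ) T,
      ‖NormedSpace.exp (t • A) x‖ ≤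
        ‖x‖ ^ (1 - t / T) * ‖NormedSpace.exp (T • A) x‖ ^ (t / T) := by
  intro t ht
  have hy : ∀ s : ℝ, HasDerivAt (fun s : ℝ => NormedSpace.exp (s • A) x)
      (A (NormedSpace.exp (s • A) x)) s := fun s => by
    simpa using (hasDerivAt_exp_smul_const' A s).clm_apply (hasDerivAt_const s x)
  have hy₀ : ∀ s : ℝ, NormedSpace.exp (s • A) x ≠ 0 := fun s hs => by
    -- `NormedSpace.isUnit_exp` would need a `NormedAlgebra ℚ (H →L[ℝ] H)` instance.
    obtain ⟨u, hu⟩ := NormedSpace.isUnit_exp_of_mem_ball (𝕂 := ℝ) (x := s • A)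
      (by simp [NormedSpace.expSeries_radius_eq_top])
    exact hx (by simpa [hu, hs, eq_comm] using congr($(u.inv_mul) x))
  simpa using norm_le_rpow_mul_rpow_of_hasDerivAt hA hy hy₀ hT ht
end

section
/- Let H be a real Hilbert space, let A : H → H be a self-adjoint continuous linear operator, and let x ∈ H with x ≠ 0. Then the function t ↦ log(‖exp(tA) x‖²) is convex on ℝ. -/
/-!
Write `u t = exp (t • A) x` and `f = ‖u‖²`. Since `u' = A u` and `A` is self-adjoint,
`f' = 2 ⟪u, A u⟫` and `f'' = 4 ‖A u‖²`, so Cauchy–Schwarz gives `f'² ≤ f f''`,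
which is exactly `(log f)'' ≥ 0`; `f` never vanishes because `exp (t • A)` is invertible.
-/

open scoped RealInnerProductSpace

open NormedSpace Set

section Exponential

variable {E : Type*} [NormedAddCommGroup E] [NormedSpace ℝ E] [CompleteSpace E]

theorem hasDerivAt_exp_smul_apply (A : E →L[ℝ] E) (x : E) (t : ℝ) :
    HasDerivAt (fun s : ℝ => exp (s • A) x) (A (exp (t • A) x)) t := by
  simpa using (hasDerivAt_exp_smul_const' A t).clm_apply (hasDerivAt_const t x)

theorem exp_apply_ne_zero (A : E →L[ℝ] E) {x : E} (hx : x ≠ 0) : exp A x ≠ 0 := by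
  have hunit : IsUnit (exp A) := isUnit_exp_of_mem_ball (𝕂 := ℝ) <|
    (expSeries_radius_eq_top ℝ (E →L[ℝ] E)).symm ▸ edist_lt_top _ _
  exact (ContinuousLinearMap.isUnit_iff_bijective.mp hunit).1.ne_iff' (map_zero _) |>.mpr hx

end Exponential

theorem convexOn_univ_log_of_sq_deriv_le_mul_deriv2_s1 {f f' f'' : ℝ → ℝ} (hpos : ∀ t, 0 < f t)
    (hf : ∀ t, HasDerivAt f (f' t) t) (hf' : ∀ t, HasDerivAt f' (f'' t) t)
    (hsq : ∀ t, f' t ^ 2 ≤ f t * f'' t) : ConvexOn ℝ univ (fun t => Real.log (f t)) := by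
  have hlog t : HasDerivAt (fun s => Real.log (f s)) (f' t / f t) t := (hf t).log (hpos t).ne'
  have hlog' t : HasDerivAt (fun s => f' s / f s) ((f'' t * f t - f' t * f' t) / f t ^ 2) t :=
    (hf' t).div (hf t) (hpos t).ne'
  refine convexOn_of_hasDerivWithinAt2_nonneg convex_univ
    (fun t _ => (hlog t).continuousAt.continuousWithinAt) (fun t _ => (hlog t).hasDerivWithinAt)
    (fun t _ => (hlog' t).hasDerivWithinAt) fun t _ => ?_
  exact div_nonneg (by nlinarith [hsq t]) (sq_nonneg _)

theorem convexOn_univ_log_norm_sq_of_hasDerivAt {H : Type*} [NormedAddCommGroup H]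
    [InnerProductSpace ℝ H] (A : H →L[ℝ] H) (hA : ∀ x y : H, ⟪A x, y⟫ = ⟪x, A y⟫)
    {u : ℝ → H} (hu : ∀ t, HasDerivAt u (A (u t)) t) (hne : ∀ t, u t ≠ 0) :
    ConvexOn ℝ univ (fun t => Real.log (‖u t‖ ^ 2)) := by
  have hAu t : HasDerivAt (fun s => A (u s)) (A (A (u t))) t :=
    A.hasFDerivAt.comp_hasDerivAt t (hu t)
  -- self-adjointness turns the second derivative `2 ⟪u, A² u⟫ + 2 ‖A u‖²` into `4 ‖A u‖²`
  have hf' t : HasDerivAt (fun s => 2 * ⟪u s, A (u s)⟫) (4 * ‖A (u t)‖ ^ 2) t := by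
    refine (((hu t).inner ℝ (hAu t)).const_mul 2).congr_deriv ?_
    rw [← hA, real_inner_self_eq_norm_sq]
    ring
  refine convexOn_univ_log_of_sq_deriv_le_mul_deriv2_s1 (fun t => by positivity [hne t])
    (fun t => (hu t).norm_sq) hf' fun t => ?_
  calc (2 * ⟪u t, A (u t)⟫) ^ 2 = 4 * |⟪u t, A (u t)⟫| ^ 2 := by rw [sq_abs]; ring
    _ ≤ 4 * (‖u t‖ * ‖A (u t)‖) ^ 2 := by gcongr; exact abs_real_inner_le_norm _ _
    _ = ‖u t‖ ^ 2 * (4 * ‖A (u t)‖ ^ 2) := by ring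

theorem stmt_1
    {H : Type*} [NormedAddCommGroup H] [InnerProductSpace ℝ H] [CompleteSpace H]
    (A : H →L[ℝ] H) (hA : ∀ x y : H, ⟪A x, y⟫ = ⟪x, A y⟫)
    (x : H) (hx : x ≠ 0) :
    ConvexOn ℝ Set.univ (fun t : ℝ => Real.log (‖NormedSpace.exp (t • A) x‖ ^ 2)) :=
  convexOn_univ_log_norm_sq_of_hasDerivAt A hA (hasDerivAt_exp_smul_apply A x)
    fun t => exp_apply_ne_zero (t • A) hx
end

section
/- Let H be a real Hilbert space, let T > 0 and D ≥ 0 be real numbers, and let Y, Φ : ℝ → H be functions such that for every t ∈ [0,T]: Y is differentiable at t with ⟨Y′(t), Y(t)⟩ ≤ D‖Y(t)‖², and Φ is differentiable at t with ⟨Φ′(t), Φ(t)⟩ ≥ −D‖Φ(t)‖². Assume Φ(T) = Y(T). Then ‖Φ(0)‖ ≤ √(e^(2DT)(1 + 2TD e^(2DT))) · ‖Y(0)‖. -/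
/-!
The energy `‖Y t‖²` satisfies `(‖Y‖²)' = 2⟪Y', Y⟫ ≤ 2D‖Y‖²`, so Grönwall gives
`‖Y T‖² ≤ e^{2DT} ‖Y 0‖²`; reversing time, the adjoint bound `⟪Φ', Φ⟫ ≥ -D‖Φ‖²` gives
`‖Φ 0‖² ≤ e^{2DT} ‖Φ T‖²`. Since `Φ T = Y T`, `‖Φ 0‖² ≤ e^{4DT} ‖Y 0‖²`, and
`e^{2DT} ≤ 1 + 2DT e^{2DT}` (the tangent-line bound `1 - x ≤ e^{-x}`) turns this into `L²`.
-/

open scoped RealInnerProductSpace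
open Set Real

section

variable {H : Type*} [NormedAddCommGroup H] [InnerProductSpace ℝ H]

theorem norm_sq_le_norm_sq_mul_exp_of_inner_deriv_le {u u' : ℝ → H} {c a b : ℝ}
    (hu : ContinuousOn u (Icc a b))
    (hu' : ∀ t ∈ Ico a b, HasDerivWithinAt u (u' t) (Ici t) t)
    (bound : ∀ t ∈ Ico a b, ⟪u' t, u t⟫ ≤ c * ‖u t‖ ^ 2) :
    ∀ t ∈ Icc a b, ‖u t‖ ^ 2 ≤ ‖u a‖ ^ 2 * exp (2 * c * (t - a)) := by
  intro t ht
  have := le_gronwallBound_of_liminf_deriv_right_le (f := fun t ↦ ‖u t‖ ^ 2)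
    (f' := fun t ↦ 2 * ⟪u t, u' t⟫) (K := 2 * c) (ε := 0) (hu.norm.pow 2)
    (fun t ht _ hr ↦ ((hu' t ht).norm_sq).liminf_right_slope_le hr) le_rfl
    (fun t ht ↦ by rw [real_inner_comm, add_zero]; linarith [bound t ht]) t ht
  rwa [gronwallBound_ε0] at this

theorem norm_sq_le_norm_sq_mul_exp_of_neg_le_inner_deriv {v v' : ℝ → H} {c a b : ℝ}
    (hv : ∀ t ∈ Icc a b, HasDerivAt v (v' t) t)
    (bound : ∀ t ∈ Icc a b, -(c * ‖v t‖ ^ 2) ≤ ⟪v' t, v t⟫) :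
    ∀ t ∈ Icc a b, ‖v t‖ ^ 2 ≤ ‖v b‖ ^ 2 * exp (2 * c * (b - t)) := by
  have mem_of_neg {s : ℝ} (hs : s ∈ Icc (-b) (-a)) : -s ∈ Icc a b :=
    ⟨by linarith [hs.2], by linarith [hs.1]⟩
  have hrev (s : ℝ) (hs : s ∈ Icc (-b) (-a)) : HasDerivAt (fun s ↦ v (-s)) (-v' (-s)) s := by
    simpa [Function.comp_def] using (hv (-s) (mem_of_neg hs)).scomp s (hasDerivAt_neg s)
  intro t ht
  have := norm_sq_le_norm_sq_mul_exp_of_inner_deriv_le (u := fun s ↦ v (-s)) (c := c)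
    (fun s hs ↦ (hrev s hs).continuousAt.continuousWithinAt)
    (fun s hs ↦ (hrev s (Ico_subset_Icc_self hs)).hasDerivWithinAt)
    (fun s hs ↦ by
      have := bound (-s) (mem_of_neg (Ico_subset_Icc_self hs))
      rw [inner_neg_left]; linarith)
    (-t) ⟨by linarith [ht.2], by linarith [ht.1]⟩
  simpa [sub_eq_neg_add, add_comm] using this

end

theorem Real.exp_le_one_add_mul_exp (x : ℝ) : exp x ≤ 1 + x * exp x := by
  have h := mul_le_mul_of_nonneg_right (one_sub_le_exp_neg x) (exp_pos x).le
  rw [← exp_add, neg_add_cancel, exp_zero] at h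
  linarith

theorem stmt_9_general
    {H : Type*} [NormedAddCommGroup H] [InnerProductSpace ℝ H]
    (T D : ℝ) (hT : 0 < T)
    (Y Y' Φ Φ' : ℝ → H)
    (hY : ∀ t ∈ Set.Icc (0 : ℝ) T, HasDerivAt Y (Y' t) t)
    (hYineq : ∀ t ∈ Set.Icc (0 : ℝ) T, ⟪Y' t, Y t⟫ ≤ D * ‖Y t‖ ^ 2)
    (hΦ : ∀ t ∈ Set.Icc (0 : ℝ) T, HasDerivAt Φ (Φ' t) t)
    (hΦineq : ∀ t ∈ Set.Icc (0 : ℝ) T, -(D * ‖Φ t‖ ^ 2) ≤ ⟪Φ' t, Φ t⟫)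
    (hTfin : Φ T = Y T) :
    ‖Φ 0‖ ≤ Real.sqrt (Real.exp (2 * D * T) * (1 + 2 * T * D * Real.exp (2 * D * T))) *
      ‖Y 0‖ := by
  have hYT := norm_sq_le_norm_sq_mul_exp_of_inner_deriv_le
    (fun t ht ↦ (hY t ht).continuousAt.continuousWithinAt)
    (fun t ht ↦ (hY t (Ico_subset_Icc_self ht)).hasDerivWithinAt)
    (fun t ht ↦ hYineq t (Ico_subset_Icc_self ht)) T ⟨hT.le, le_rfl⟩
  have hΦ0 := norm_sq_le_norm_sq_mul_exp_of_neg_le_inner_deriv hΦ hΦineq 0 ⟨le_rfl, hT.le⟩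
  rw [sub_zero] at hYT hΦ0
  set e := exp (2 * D * T)
  have he : e ≤ 1 + 2 * T * D * e := by
    linear_combination exp_le_one_add_mul_exp (2 * D * T)
  have hsq : ‖Φ 0‖ ^ 2 ≤ (e * (1 + 2 * T * D * e)) * ‖Y 0‖ ^ 2 := by
    rw [hTfin] at hΦ0
    calc ‖Φ 0‖ ^ 2 ≤ ‖Y 0‖ ^ 2 * e * e := hΦ0.trans (by gcongr)
      _ ≤ (e * (1 + 2 * T * D * e)) * ‖Y 0‖ ^ 2 := by
        rw [mul_comm e, mul_assoc, mul_comm]; gcongr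
  rw [← sqrt_sq (norm_nonneg (Φ 0)), ← sqrt_sq (norm_nonneg (Y 0)),
    ← sqrt_mul' _ (by positivity)]
  exact sqrt_le_sqrt hsq

theorem stmt_9
    {H : Type*} [NormedAddCommGroup H] [InnerProductSpace ℝ H] [CompleteSpace H]
    (T D : ℝ) (hT : 0 < T) (hD : 0 ≤ D)
    (Y Y' Φ Φ' : ℝ → H)
    (hY : ∀ t ∈ Set.Icc (0 : ℝ) T, HasDerivAt Y (Y' t) t)
    (hYineq : ∀ t ∈ Set.Icc (0 : ℝ) T, ⟪Y' t, Y t⟫ ≤ D * ‖Y t‖ ^ 2)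
    (hΦ : ∀ t ∈ Set.Icc (0 : ℝ) T, HasDerivAt Φ (Φ' t) t)
    (hΦineq : ∀ t ∈ Set.Icc (0 : ℝ) T, -(D * ‖Φ t‖ ^ 2) ≤ ⟪Φ' t, Φ t⟫)
    (hTfin : Φ T = Y T) :
    ‖Φ 0‖ ≤ Real.sqrt (Real.exp (2 * D * T) * (1 + 2 * T * D * Real.exp (2 * D * T))) *
      ‖Y 0‖ :=
  stmt_9_general T D hT Y Y' Φ Φ' hY hYineq hΦ hΦineq hTfin
end
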